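/- (Optimal preconditioning coefficients) Let x_γ = α_γ x₀ + σ_γ ε with Var[x₀] = σ_data² I (per coordinate) and ε ~ N(0,I) independent. Consider the parameterization ε_θ(x_γ) = c_skip·x_γ + c_out·F_θ(c_in·x_γ). The choices ensuring (1) Var[c_in·x_γ] = 1, (2) Var[(ε - c_skip·x_γ)/c_out] = 1, and (3) c_skip minimizes c_out² subject to (2), are: c_in = 1/√(σ_γ² + σ_data²α_γ²), c_skip = σ_γ/(σ_γ² + σ_data²α_γ²), c_out = σ_data·α_γ/√(σ_γ² + σ_data²α_γ²). In particular, if σ_data = 1 and α_γ² + σ_γ² = 1, then c_in = 1, c_skip = σ_γ, c_out = α_γ. -/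

import Mathlib

open Real

/-!
The effective-target variance `(1 - cσ)² + c²α²σ_data²` is a quadratic in `c`; completing the
square writes it as `S (c - σ/S)² + σ_data²α²/S` with `S = σ² + σ_data²α²`, which exhibits both
the unique minimizer `c_skip = σ/S` and the minimal value `c_out² = σ_data²α²/S`.
-/

/-- The variance of `ε - c x_γ` when `s = σ_γ` and `v = α_γ² σ_data²`. -/
def skipLoss (s v c : ℝ) : ℝ := (1 - c * s) ^ 2 + c ^ 2 * v

section skipLoss

variable {s v : ℝ}

theorem skipLoss_eq_completeSquare (h : s ^ 2 + v ≠ 0) (c : ℝ) :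
    skipLoss s v c = (s ^ 2 + v) * (c - s / (s ^ 2 + v)) ^ 2 + v / (s ^ 2 + v) := by
  unfold skipLoss
  field_simp
  ring

theorem skipLoss_at_optimum (h : s ^ 2 + v ≠ 0) :
    skipLoss s v (s / (s ^ 2 + v)) = v / (s ^ 2 + v) := by
  rw [skipLoss_eq_completeSquare h, sub_self]
  ring

theorem skipLoss_optimum_le (h : 0 < s ^ 2 + v) (c : ℝ) :
    skipLoss s v (s / (s ^ 2 + v)) ≤ skipLoss s v c := by
  rw [skipLoss_at_optimum h.ne', skipLoss_eq_completeSquare h.ne']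
  have := mul_nonneg h.le (sq_nonneg (c - s / (s ^ 2 + v)))
  linarith

theorem skipLoss_optimum_lt_of_ne (h : 0 < s ^ 2 + v) {c : ℝ} (hc : c ≠ s / (s ^ 2 + v)) :
    skipLoss s v (s / (s ^ 2 + v)) < skipLoss s v c := by
  rw [skipLoss_at_optimum h.ne', skipLoss_eq_completeSquare h.ne']
  have := mul_pos h (sq_pos_of_ne_zero (sub_ne_zero.mpr hc))
  linarith

end skipLoss

theorem optimal_preconditioning_general (σd αg σg : ℝ) (hσ : 0 < σg)
    (cin cskip cout : ℝ)
    (hcin : cin = (Real.sqrt (σg ^ 2 + σd ^ 2 * αg ^ 2))⁻¹)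
    (hcskip : cskip = σg / (σg ^ 2 + σd ^ 2 * αg ^ 2))
    (hcout : cout = σd * αg / Real.sqrt (σg ^ 2 + σd ^ 2 * αg ^ 2)) :
    -- (1) unit variance of the network input: Var[c_in x_γ] = c_in²(α²σ_data² + σ²) = 1
    cin ^ 2 * (σg ^ 2 + σd ^ 2 * αg ^ 2) = 1 ∧
    -- (2) unit variance of the effective target: c_out² = Var[ε - c_skip x_γ]
    cout ^ 2 = (1 - cskip * σg) ^ 2 + cskip ^ 2 * αg ^ 2 * σd ^ 2 ∧
    -- (3) c_skip is the unique minimizer of c ↦ (1 - cσ)² + c²α²σ_data²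
    (∀ c : ℝ, (1 - cskip * σg) ^ 2 + cskip ^ 2 * αg ^ 2 * σd ^ 2
      ≤ (1 - c * σg) ^ 2 + c ^ 2 * αg ^ 2 * σd ^ 2) ∧
    (∀ c : ℝ, c ≠ cskip → (1 - cskip * σg) ^ 2 + cskip ^ 2 * αg ^ 2 * σd ^ 2
      < (1 - c * σg) ^ 2 + c ^ 2 * αg ^ 2 * σd ^ 2) ∧
    (σd = 1 → αg ^ 2 + σg ^ 2 = 1 → cin = 1 ∧ cskip = σg ∧ cout = αg) := by
  have hS : 0 < σg ^ 2 + σd ^ 2 * αg ^ 2 := by positivity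
  have hsqrt_sq := Real.sq_sqrt hS.le
  have hloss (c : ℝ) :
      (1 - c * σg) ^ 2 + c ^ 2 * αg ^ 2 * σd ^ 2 = skipLoss σg (σd ^ 2 * αg ^ 2) c := by
    unfold skipLoss
    ring
  simp only [hloss, hcskip]
  refine ⟨?_, ?_, skipLoss_optimum_le hS, fun c => skipLoss_optimum_lt_of_ne hS, ?_⟩
  · rw [hcin, inv_pow, hsqrt_sq, inv_mul_cancel₀ hS.ne']
  · rw [skipLoss_at_optimum hS.ne', hcout, div_pow, mul_pow, hsqrt_sq]
  · rintro rfl hunit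
    have hS1 : σg ^ 2 + 1 ^ 2 * αg ^ 2 = 1 := by linarith
    rw [hcin, hcout, hS1, Real.sqrt_one]
    norm_num

/-- Optimal preconditioning coefficients (EDM first principles): with per-coordinate
data variance `σ_data²`, the choices `c_in = 1/√(σ² + σ_data²α²)`,
`c_skip = σ/(σ² + σ_data²α²)`, `c_out = σ_data·α/√(σ² + σ_data²α²)` give unit input
variance, unit effective-target variance, and `c_skip` uniquely minimizes `c_out²`.
If `σ_data = 1` and `α² + σ² = 1`, they reduce to `c_in = 1, c_skip = σ, c_out = α`. -/
theorem optimal_preconditioning (σd αg σg : ℝ) (hσd : 0 < σd) (hα : 0 < αg) (hσ : 0 < σg)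
    (cin cskip cout : ℝ)
    (hcin : cin = (Real.sqrt (σg ^ 2 + σd ^ 2 * αg ^ 2))⁻¹)
    (hcskip : cskip = σg / (σg ^ 2 + σd ^ 2 * αg ^ 2))
    (hcout : cout = σd * αg / Real.sqrt (σg ^ 2 + σd ^ 2 * αg ^ 2)) :
    -- (1) unit variance of the network input: Var[c_in x_γ] = c_in²(α²σ_data² + σ²) = 1
    cin ^ 2 * (σg ^ 2 + σd ^ 2 * αg ^ 2) = 1 ∧
    -- (2) unit variance of the effective target: c_out² = Var[ε - c_skip x_γ]
    cout ^ 2 = (1 - cskip * σg) ^ 2 + cskip ^ 2 * αg ^ 2 * σd ^ 2 ∧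
    -- (3) c_skip is the unique minimizer of c ↦ (1 - cσ)² + c²α²σ_data²
    (∀ c : ℝ, (1 - cskip * σg) ^ 2 + cskip ^ 2 * αg ^ 2 * σd ^ 2
      ≤ (1 - c * σg) ^ 2 + c ^ 2 * αg ^ 2 * σd ^ 2) ∧
    (∀ c : ℝ, c ≠ cskip → (1 - cskip * σg) ^ 2 + cskip ^ 2 * αg ^ 2 * σd ^ 2
      < (1 - c * σg) ^ 2 + c ^ 2 * αg ^ 2 * σd ^ 2) ∧
    (σd = 1 → αg ^ 2 + σg ^ 2 = 1 → cin = 1 ∧ cskip = σg ∧ cout = αg) :=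
  optimal_preconditioning_general σd αg σg hσ cin cskip cout hcin hcskip hcout
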